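/- Let A be a finite-dimensional algebra over a field k and let 𝒳 be an additively closed full subcategory of mod A that is closed under quotients of indecomposable modules. Suppose f : X → M is a right minimal 𝒳-approximation of an A-module M, and write X = X_1 ⊕ ⋯ ⊕ X_m with each X_i indecomposable. Then the restriction of f to each direct summand X_i is injective. Moreover, if 𝒳 contains all indecomposable projective A-modules, then f is surjective. -/

import Mathlib

/-!
Write `φ = ι i ≫ f`. Since `𝒳` is closed under quotients of indecomposables, the coimage
`Xᵢ / ker φ` lies in `𝒳`, so the map it induces to `M` factors through `f` by some `h`. Then
`g = 1 - πᵢ ιᵢ + πᵢ q h` (with `q : Xᵢ → Xᵢ / ker φ`) satisfies `g ≫ f = f`, so `g` is an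
isomorphism by right minimality; but `g` vanishes on `ker φ ⊆ Xᵢ`, hence `ker φ = 0`.

For surjectivity, splitting off direct summands (by induction on the length) puts every finitely
generated projective module into `𝒳`; a free module mapping onto `M` then factors through `f`.
-/

open CategoryTheory CategoryTheory.Limits

attribute [local instance] CategoryTheory.Limits.HasFiniteBiproducts.of_hasFiniteProducts

section Posets

variable {P : Type} [PartialOrder P]

/-- Zigzag connectivity of two elements of a subset `S` of a poset: they are linked by a
zigzag of comparable pairs inside `S`. -/
def ZigzagConnIn (S : Set P) (a b : S) : Prop :=
  Relation.ReflTransGen (fun u v : S => (u : P) ≤ v ∨ (v : P) ≤ u) a b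

/-- A subset of a poset is convex if `x ≤ z ≤ y` with `x, y` in the subset implies `z` is. -/
def IsConvex (S : Set P) : Prop :=
  ∀ ⦃x y z : P⦄, x ∈ S → y ∈ S → x ≤ z → z ≤ y → z ∈ S

/-- An interval of a poset: a nonempty, convex, zigzag-connected subset. -/
def IsIntervalSet (S : Set P) : Prop :=
  S.Nonempty ∧ IsConvex S ∧ ∀ a b : S, ZigzagConnIn S a b

end Posets

section IntervalModules

variable (k : Type) [Field k] {P : Type} [PartialOrder P]

open Classical in
/-- The linear map between the fibers of the interval module. -/
noncomputable def intervalModuleAux (S : Set P) (p q : P) :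
    ↥(if p ∈ S then (⊤ : Submodule k k) else ⊥) →ₗ[k]
      ↥(if q ∈ S then (⊤ : Submodule k k) else ⊥) where
  toFun x := ⟨(if p ∈ S ∧ q ∈ S then (1 : k) else 0) * x.1, by
    by_cases hq : q ∈ S
    · rw [if_pos hq]; exact Submodule.mem_top
    · rw [if_neg hq, if_neg (fun h => hq h.2), zero_mul]; exact Submodule.zero_mem _⟩
  map_add' x y := by ext; simp [mul_add]
  map_smul' c x := by ext; simp

open Classical in
/-- The interval module `k_S` associated to a convex subset `S` of a poset `P`:
it is `k` at points of `S`, `0` elsewhere, with identity structure maps inside `S`. -/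
noncomputable def intervalModule (S : Set P) (hS : IsConvex S) : P ⥤ ModuleCat.{0} k where
  obj p := ModuleCat.of k ↥(if p ∈ S then (⊤ : Submodule k k) else ⊥)
  map {p q} _ := ModuleCat.ofHom (intervalModuleAux k S p q)
  map_id p := by
    apply ModuleCat.hom_ext
    apply LinearMap.ext
    rintro ⟨x, hx⟩
    apply Subtype.ext
    show (if p ∈ S ∧ p ∈ S then (1 : k) else 0) * x = x
    by_cases hp : p ∈ S
    · simp [hp]
    · rw [if_neg hp] at hx
      simp [hp, (Submodule.mem_bot k).mp hx]
  map_comp {p q r} f g := by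
    apply ModuleCat.hom_ext
    apply LinearMap.ext
    rintro ⟨x, hx⟩
    apply Subtype.ext
    show (if p ∈ S ∧ r ∈ S then (1 : k) else 0) * x
      = (if q ∈ S ∧ r ∈ S then (1 : k) else 0) * ((if p ∈ S ∧ q ∈ S then (1 : k) else 0) * x)
    by_cases hp : p ∈ S
    · by_cases hr : r ∈ S
      · have hq : q ∈ S := hS hp hr (leOfHom f) (leOfHom g)
        simp [hp, hq, hr]
      · simp [hr]
    · rw [if_neg hp] at hx
      simp [(Submodule.mem_bot k).mp hx]

/-- A persistence module is an interval module if it is isomorphic to `k_S` for some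
interval `S`. -/
def IsIntervalModule (M : P ⥤ ModuleCat.{0} k) : Prop :=
  ∃ (S : Set P) (hS : IsIntervalSet S), Nonempty (M ≅ intervalModule k S hS.2.1)

/-- A persistence module is interval-decomposable if it is isomorphic to a finite direct sum
of interval modules. -/
def IsIntervalDecomposable (M : P ⥤ ModuleCat.{0} k) : Prop :=
  ∃ (n : ℕ) (J : Fin n → (P ⥤ ModuleCat.{0} k)),
    (∀ i, IsIntervalModule k (J i)) ∧ Nonempty (M ≅ ⨁ J)

/-- The support of a persistence module. -/
def moduleSupport (M : P ⥤ ModuleCat.{0} k) : Set P := {p : P | ¬ IsZero (M.obj p)}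

/-- A persistence module valued in finite-dimensional vector spaces. -/
def PointwiseFinite (M : P ⥤ ModuleCat.{0} k) : Prop :=
  ∀ p : P, FiniteDimensional k (M.obj p)

end IntervalModules

section Approximations

variable {C : Type*} [Category C]

/-- `f : X ⟶ M` is a right `𝒳`-approximation of `M` if `X ∈ 𝒳` and every morphism
from an object of `𝒳` to `M` factors through `f`. -/
def IsRightApproximation (𝒳 : C → Prop) {X M : C} (f : X ⟶ M) : Prop :=
  𝒳 X ∧ ∀ ⦃Y : C⦄ (g : Y ⟶ M), 𝒳 Y → ∃ h : Y ⟶ X, h ≫ f = g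

/-- `f : X ⟶ M` is right minimal if every endomorphism `g` of `X` with `f ∘ g = f`
is an isomorphism. -/
def IsRightMinimal {X M : C} (f : X ⟶ M) : Prop :=
  ∀ g : X ⟶ X, g ≫ f = f → IsIso g

end Approximations

/-- An interval cover: a right minimal approximation by interval-decomposable modules. -/
def IsIntervalCover (k : Type) [Field k] {P : Type} [PartialOrder P]
    {X M : P ⥤ ModuleCat.{0} k} (f : X ⟶ M) : Prop :=
  IsRightApproximation (IsIntervalDecomposable k) f ∧ IsRightMinimal f

section Resolutions

variable {C : Type*} [Category C] [Limits.HasZeroMorphisms C]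

/-- `M` admits a resolution `0 ⟶ J_n ⟶ ⋯ ⟶ J_1 ⟶ J_0 ⟶ M ⟶ 0` of length `n` by objects
of `𝒳`: an exact sequence in which every `J_i` lies in `𝒳`.  (The data is encoded by an
`ℕ`-indexed complex which vanishes in degrees `> n` and is exact everywhere.) -/
def HasResolutionOfLength (𝒳 : C → Prop) (n : ℕ) (M : C) : Prop :=
  ∃ (J : ℕ → C) (d : ∀ i, J (i + 1) ⟶ J i) (f : J 0 ⟶ M) (w0 : d 0 ≫ f = 0)
    (w : ∀ i, d (i + 1) ≫ d i = 0),
    (∀ i, i ≤ n → 𝒳 (J i)) ∧ (∀ i, n < i → IsZero (J i)) ∧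
    Epi f ∧ (ShortComplex.mk (d 0) f w0).Exact ∧
    ∀ i, (ShortComplex.mk (d (i + 1)) (d i) (w i)).Exact

end Resolutions

section ModA

/-- `k`-linear structure on the category of finite-dimensional modules over a
`k`-algebra `A`. -/
noncomputable instance fgModuleCatLinear (k A : Type) [Field k] [Ring A] [Algebra k A] :
    Linear k (FGModuleCat A) := by
  dsimp [FGModuleCat]
  infer_instance

variable {C : Type*} [Category C] [Preadditive C]

/-- `Z`, together with the given injections and projections, is a biproduct (direct sum)
of `X` and `Y`. -/
def IsBiproductOf (Z X Y : C) (ι₁ : X ⟶ Z) (ι₂ : Y ⟶ Z) (π₁ : Z ⟶ X) (π₂ : Z ⟶ Y) : Prop :=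
  ι₁ ≫ π₁ = 𝟙 X ∧ ι₂ ≫ π₂ = 𝟙 Y ∧ ι₁ ≫ π₂ = 0 ∧ ι₂ ≫ π₁ = 0 ∧ π₁ ≫ ι₁ + π₂ ≫ ι₂ = 𝟙 Z

/-- An object is indecomposable if it is nonzero and, whenever it is a direct sum of two
objects, one of them is zero. -/
def IndecObj (X : C) : Prop :=
  ¬ Limits.IsZero X ∧ ∀ (Y Z : C) (ι₁ : Y ⟶ X) (ι₂ : Z ⟶ X) (π₁ : X ⟶ Y) (π₂ : X ⟶ Z),
    IsBiproductOf X Y Z ι₁ ι₂ π₁ π₂ → Limits.IsZero Y ∨ Limits.IsZero Z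

/-- A predicate (class of objects) `𝒳` is additively closed: closed under isomorphisms,
finite direct sums and direct summands. -/
def AdditivelyClosed (𝒳 : C → Prop) : Prop :=
  (∀ ⦃X Y : C⦄, (X ≅ Y) → 𝒳 X → 𝒳 Y) ∧
  (∀ (Z X Y : C) (ι₁ : X ⟶ Z) (ι₂ : Y ⟶ Z) (π₁ : Z ⟶ X) (π₂ : Z ⟶ Y),
    IsBiproductOf Z X Y ι₁ ι₂ π₁ π₂ → 𝒳 X → 𝒳 Y → 𝒳 Z) ∧
  (∀ (Z X Y : C) (ι₁ : X ⟶ Z) (ι₂ : Y ⟶ Z) (π₁ : Z ⟶ X) (π₂ : Z ⟶ Y),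
    IsBiproductOf Z X Y ι₁ ι₂ π₁ π₂ → 𝒳 Z → 𝒳 X)

/-- `𝒳` is closed under quotients of indecomposable objects: for a short exact sequence
`0 → Z → X → Y → 0` with `X` indecomposable, `X ∈ 𝒳` implies `Y ∈ 𝒳`. -/
def ClosedUnderQuotientsOfIndec (𝒳 : C → Prop) : Prop :=
  ∀ S : ShortComplex C, S.ShortExact → IndecObj S.X₂ → 𝒳 S.X₂ → 𝒳 S.X₃

end ModA

section Preadditive

variable {C : Type*} [Category C] [Preadditive C] {𝒳 : C → Prop}

lemma AdditivelyClosed.of_isZero (hadd : AdditivelyClosed 𝒳) {X Z : C} (hX : 𝒳 X)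
    (hZ : IsZero Z) : 𝒳 Z :=
  hadd.2.2 X Z X 0 (𝟙 X) 0 (𝟙 X) ⟨hZ.eq_of_src _ _, by simp, by simp, by simp, by simp⟩ hX

lemma AdditivelyClosed.of_retract (hadd : AdditivelyClosed 𝒳) {X Y : C} (r : Retract Y X)
    [HasKernel r.r] (hX : 𝒳 X) : 𝒳 Y :=
  hadd.2.2 X Y (kernel r.r) r.i (kernel.ι r.r) r.r (kernel.lift r.r (𝟙 X - r.r ≫ r.i) (by simp))
    ⟨r.retract, by ext; simp, by ext; simp, by simp, by simp⟩ hX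

theorem AdditivelyClosed.mem_of_projective (hadd : AdditivelyClosed 𝒳) {X₀ : C} (hX₀ : 𝒳 X₀)
    (d : C → ℕ)
    (hd : ∀ Z X Y ι₁ ι₂ π₁ π₂, IsBiproductOf Z X Y ι₁ ι₂ π₁ π₂ → d Z = d X + d Y)
    (hpos : ∀ X, ¬ IsZero X → 0 < d X) (hind : ∀ J, Projective J → IndecObj J → 𝒳 J)
    (P : C) [Projective P] : 𝒳 P := by
  induction hn : d P using Nat.strong_induction_on generalizing P with
  | _ n ih =>
  by_cases hzero : IsZero P
  · exact hadd.of_isZero hX₀ hzero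
  by_cases hindec : IndecObj P
  · exact hind P inferInstance hindec
  obtain ⟨Y, Z, ι₁, ι₂, π₁, π₂, hb, hY, hZ⟩ : ∃ (Y Z : C) (ι₁ : Y ⟶ P) (ι₂ : Z ⟶ P)
      (π₁ : P ⟶ Y) (π₂ : P ⟶ Z), IsBiproductOf P Y Z ι₁ ι₂ π₁ π₂ ∧ ¬ IsZero Y ∧ ¬ IsZero Z := by
    simpa [IndecObj, hzero] using hindec
  have hdP := hd _ _ _ _ _ _ _ hb
  have hY_lt : d Y < n := by have := hpos Z hZ; omega
  have hZ_lt : d Z < n := by have := hpos Y hY; omega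
  have : Projective Y := Retract.projective ⟨ι₁, π₁, hb.1⟩
  have : Projective Z := Retract.projective ⟨ι₂, π₂, hb.2.1⟩
  exact hadd.2.1 P Y Z ι₁ ι₂ π₁ π₂ hb (ih _ hY_lt Y rfl) (ih _ hZ_lt Z rfl)

end Preadditive

theorem IsRightMinimal.mono_comp_of_indecObj {C : Type*} [Category C] [Abelian C]
    {𝒳 : C → Prop} (hquot : ClosedUnderQuotientsOfIndec 𝒳) {X M : C} {f : X ⟶ M}
    (happrox : IsRightApproximation 𝒳 f) (hmin : IsRightMinimal f) {Y : C} (hY : IndecObj Y)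
    (hY𝒳 : 𝒳 Y) (r : Retract Y X) : Mono (r.i ≫ f) := by
  set φ := r.i ≫ f
  let S := ShortComplex.mk (kernel.ι φ) (cokernel.π (kernel.ι φ)) (cokernel.condition _)
  have hS : S.ShortExact := { exact := S.exact_of_g_is_cokernel (cokernelIsCokernel _) }
  obtain ⟨h, hh⟩ := happrox.2 (cokernel.desc _ φ (kernel.condition φ)) (hquot S hS hY hY𝒳)
  let g : X ⟶ X := 𝟙 X - r.r ≫ r.i + r.r ≫ cokernel.π (kernel.ι φ) ≫ h
  have hgf : g ≫ f = f := by simp [g, hh, φ]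
  have : IsIso g := hmin g hgf
  have hker : (kernel.ι φ ≫ r.i) ≫ g = 0 := by simp [g]
  apply Abelian.mono_of_kernel_ι_eq_zero
  calc kernel.ι φ = (kernel.ι φ ≫ r.i) ≫ r.r := by simp
    _ = 0 := by rw [(cancel_mono g).1 (hker.trans (zero_comp).symm), zero_comp]

namespace FGModuleCat

universe v

variable {A : Type} [Ring A]

lemma isZero_of_subsingleton (N : FGModuleCat.{v} A) [Subsingleton N] : IsZero N :=
  (IsZero.iff_id_eq_zero N).2 (by ext; exact Subsingleton.elim _ _)

lemma injective_of_mono [IsNoetherianRing A] {X Y : FGModuleCat.{v} A} (f : X ⟶ Y) [Mono f] :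
    Function.Injective f :=
  (ModuleCat.mono_iff_injective _).1 ((forget₂ (FGModuleCat A) (ModuleCat A)).map_mono f)

def linearEquivProdOfIsBiproductOf {Z X Y : FGModuleCat.{v} A} {ι₁ : X ⟶ Z} {ι₂ : Y ⟶ Z}
    {π₁ : Z ⟶ X} {π₂ : Z ⟶ Y} (h : IsBiproductOf Z X Y ι₁ ι₂ π₁ π₂) : Z ≃ₗ[A] X × Y :=
  LinearEquiv.ofLinearMap (π₁.hom.hom.prod π₂.hom.hom) (ι₁.hom.hom.coprod ι₂.hom.hom)
    (by
      ext x <;> simp only [LinearMap.coe_comp, Function.comp_apply, LinearMap.inl_apply,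
        LinearMap.inr_apply, LinearMap.coprod_apply, LinearMap.prod_apply, map_zero, add_zero,
        zero_add, LinearMap.id_coe, id_eq]
      exacts [ConcreteCategory.congr_hom h.1 x, ConcreteCategory.congr_hom h.2.2.1 x,
        ConcreteCategory.congr_hom h.2.2.2.1 x, ConcreteCategory.congr_hom h.2.1 x])
    ((LinearMap.coprod_comp_prod _ _ _ _).trans congr(($(h.2.2.2.2)).hom.hom))

lemma length_eq_add_of_isBiproductOf {Z X Y : FGModuleCat.{v} A} {ι₁ : X ⟶ Z} {ι₂ : Y ⟶ Z}
    {π₁ : Z ⟶ X} {π₂ : Z ⟶ Y} (h : IsBiproductOf Z X Y ι₁ ι₂ π₁ π₂) :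
    Module.length A Z = Module.length A X + Module.length A Y := by
  rw [(linearEquivProdOfIsBiproductOf h).length_eq, Module.length_prod]

theorem mem_of_projective [IsArtinianRing A] [IsNoetherianRing A] {𝒳 : FGModuleCat.{v} A → Prop}
    (hadd : AdditivelyClosed 𝒳) {X₀ : FGModuleCat.{v} A} (hX₀ : 𝒳 X₀)
    (hind : ∀ J, Projective J → IndecObj J → 𝒳 J) (P : FGModuleCat.{v} A) [Projective P] :
    𝒳 P := by
  refine hadd.mem_of_projective hX₀ (fun N => (Module.length A N).toNat) (fun _ _ _ _ _ _ _ h => ?_)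
    (fun N hN => ?_) hind P
  · rw [length_eq_add_of_isBiproductOf h, ENat.toNat_add Module.length_ne_top Module.length_ne_top]
  · have : Nontrivial N := not_subsingleton_iff_nontrivial.1 fun _ => hN (isZero_of_subsingleton N)
    exact ENat.toNat_pos Module.length_pos.ne' Module.length_ne_top

lemma projective_of_free (P : Type v) [AddCommGroup P] [Module A P] [Module.Finite A P]
    [Module.Free A P] : Projective (FGModuleCat.of A P) :=
  (forget₂ (FGModuleCat A) (ModuleCat A)).projective_of_map_projective
    (ModuleCat.projective_of_free (Module.Free.chooseBasis A P))

lemma exists_projective_surjective (M : FGModuleCat.{v} A) :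
    ∃ (P : FGModuleCat.{v} A) (p : P ⟶ M), Projective P ∧ Function.Surjective p := by
  obtain ⟨n, p, hp⟩ := Module.Finite.exists_fin' A M
  refine ⟨FGModuleCat.of A (ULift.{v} (Fin n → A)),
    ObjectProperty.homMk (ModuleCat.ofHom (p ∘ₗ ULift.moduleEquiv.toLinearMap)),
    projective_of_free _, hp.comp ULift.moduleEquiv.surjective⟩

end FGModuleCat

theorem rightMinimalApproximation_summand_injective
    (k : Type) [Field k] (A : Type) [Ring A] [Algebra k A] [FiniteDimensional k A]
    (𝒳 : FGModuleCat A → Prop)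
    (hadd : AdditivelyClosed 𝒳) (hquot : ClosedUnderQuotientsOfIndec 𝒳)
    (M X : FGModuleCat A) (f : X ⟶ M)
    (happrox : IsRightApproximation 𝒳 f) (hmin : IsRightMinimal f)
    (m : ℕ) (Xs : Fin m → FGModuleCat A) (hXs : ∀ i, IndecObj (Xs i))
    (ι : ∀ i, Xs i ⟶ X) (π : ∀ i, X ⟶ Xs i)
    (hιπ : ∀ i, ι i ≫ π i = 𝟙 (Xs i)) :
    (∀ i, Function.Injective ⇑(ι i ≫ f)) ∧
    ((∀ J : FGModuleCat A, Projective J → IndecObj J → 𝒳 J) →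
      Function.Surjective ⇑f) := by
  have : IsNoetherianRing A := IsNoetherianRing.of_finite k A
  have : IsArtinianRing A := IsArtinianRing.of_finite k A
  refine ⟨fun i => ?_, fun hproj => ?_⟩
  · let r : Retract (Xs i) X := ⟨ι i, π i, hιπ i⟩
    have := hmin.mono_comp_of_indecObj hquot happrox (hXs i) (hadd.of_retract r happrox.1) r
    exact FGModuleCat.injective_of_mono (r.i ≫ f)
  · obtain ⟨P, p, _, hp⟩ := FGModuleCat.exists_projective_surjective M
    obtain ⟨h, rfl⟩ := happrox.2 p (FGModuleCat.mem_of_projective hadd happrox.1 hproj P)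
    exact Function.Surjective.of_comp (g := h) hp
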